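/- arXiv:2406.11722 — 8 statements merged into one kernel-verified Lean document; each statement's English description precedes it below -/
import Mathlib

section
/- In an aligned metric space, if x, y ∈ [a,b], then [x,y] ⊆ [a,b]. -/
def itv {X : Type*} [MetricSpace X] (a b : X) : Set X :=
  {p | dist a p + dist p b = dist a b}

/-- `b` is strictly between `a` and `c`. -/
def MSBtw {X : Type*} [MetricSpace X] (a b c : X) : Prop :=
  dist a b + dist b c = dist a c ∧ a ≠ b ∧ b ≠ c

def Aligned (X : Type*) [MetricSpace X] : Prop :=
  ∀ n : ℕ, 1 ≤ n → ∀ x : ℕ → X,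
    (∀ i, 0 < i → i < n → MSBtw (x (i - 1)) (x i) (x (i + 1))) →
    itv (x 0) (x n) = ⋃ i ∈ Finset.range n, itv (x i) (x (i + 1))

lemma itv_comm {X : Type*} [MetricSpace X] (a b : X) : itv a b = itv b a := by
  ext p
  simp only [itv, Set.mem_setOf_eq]
  rw [dist_comm a p, dist_comm p b, dist_comm a b]
  constructor <;> intro h <;> linarith

lemma itv_sub_right {X : Type*} [MetricSpace X] {a b y : X} (hy : y ∈ itv a b) :
    itv a y ⊆ itv a b := by
  intro p hp
  simp only [itv, Set.mem_setOf_eq] at *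
  have t1 := dist_triangle a p b
  have t2 := dist_triangle p y b
  linarith

lemma itv_sub_left {X : Type*} [MetricSpace X] {a b y : X} (hy : y ∈ itv a b) :
    itv y b ⊆ itv a b := by
  intro p hp
  simp only [itv, Set.mem_setOf_eq] at *
  have t1 := dist_triangle a p b
  have t2 := dist_triangle a y p
  linarith

theorem stmt_3 {X : Type*} [MetricSpace X] (hX : Aligned X)
    (a b x y : X) (hx : x ∈ itv a b) (hy : y ∈ itv a b) :
    itv x y ⊆ itv a b := by
  by_cases hax : a = x
  · subst hax; exact itv_sub_right hy
  by_cases hxb : x = b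
  · subst hxb
    rw [itv_comm]
    exact itv_sub_left hy
  -- x is strictly between a and b; use alignedness with the chain a, x, b
  set f : ℕ → X := fun i => if i = 0 then a else if i = 1 then x else b with hf
  have hbtw : ∀ i, 0 < i → i < 2 → MSBtw (f (i - 1)) (f i) (f (i + 1)) := by
    intro i h1 h2
    interval_cases i
    simp only [hf]
    norm_num
    exact ⟨hx, hax, hxb⟩
  have key := hX 2 (by norm_num) f hbtw
  have hf0 : f 0 = a := rfl
  have hf1 : f 1 = x := rfl
  have hf2 : f 2 = b := rfl
  rw [hf0, hf2] at key
  have hsplit : itv a b = itv a x ∪ itv x b := by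
    rw [key]
    rw [show (2:ℕ) = 1 + 1 from rfl, Finset.range_add_one, Finset.range_one]
    simp [hf0, hf1, hf2, Set.union_comm]
  rw [hsplit] at hy
  rcases hy with hy | hy
  · -- y ∈ itv a x
    have h1 : itv x y ⊆ itv x a := by
      rw [itv_comm a x] at hy
      exact itv_sub_right hy
    rw [itv_comm x a] at h1
    exact h1.trans (itv_sub_right hx)
  · -- y ∈ itv x b
    exact (itv_sub_right hy).trans (itv_sub_left hx)
end

section
/- For points a, b of an aligned metric space, the function p ↦ d(a,p) restricted to the interval [a,b] is an isometry into ℝ; in particular, two points of [a,b] at equal distance from a are equal. -/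
theorem stmt_4 {X : Type*} [MetricSpace X] (hX : Aligned X)
    (a b x y : X) (hx : x ∈ itv a b) (hy : y ∈ itv a b) :
    |dist a y - dist a x| = dist x y := by
  simp only [itv, Set.mem_setOf_eq] at hx hy
  by_cases hax : a = x
  · subst hax
    simp [abs_of_nonneg dist_nonneg, dist_comm]
  by_cases hxb : x = b
  · subst hxb
    have : dist a y - dist a x = -(dist x y) := by
      rw [dist_comm x y]; linarith
    rw [this, abs_neg, abs_of_nonneg dist_nonneg]
  -- Alignment with the chain a, x, b
  set f : ℕ → X := fun i => if i = 0 then a else if i = 1 then x else b with hf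
  have hchain : ∀ i, 0 < i → i < 2 → MSBtw (f (i - 1)) (f i) (f (i + 1)) := by
    intro i hi1 hi2
    interval_cases i
    simpa [hf, MSBtw] using ⟨hx, hax, hxb⟩
  have hsplit := hX 2 (by norm_num) f hchain
  have hy2 : y ∈ itv (f 0) (f 2) := by
    simp only [hf, itv, Set.mem_setOf_eq]; simpa using hy
  rw [hsplit] at hy2
  simp only [Set.mem_iUnion, Finset.mem_range] at hy2
  obtain ⟨i, hi, hyi⟩ := hy2
  interval_cases i
  · -- y ∈ itv a x
    simp only [hf, itv, Set.mem_setOf_eq] at hyi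
    norm_num at hyi
    have : dist a y - dist a x = -(dist x y) := by
      rw [dist_comm x y]; linarith
    rw [this, abs_neg, abs_of_nonneg dist_nonneg]
  · -- y ∈ itv x b
    simp only [hf, itv, Set.mem_setOf_eq] at hyi
    norm_num at hyi
    have : dist a y - dist a x = dist x y := by linarith
    rw [this, abs_of_nonneg dist_nonneg]
end

section
/- A metric space is aligned if and only if it is geodetic and has no 4-cuts. -/
def Geodetic (X : Type*) [MetricSpace X] : Prop :=
  ∀ a b x y : X, x ∈ itv a b → y ∈ itv a b →
    (x ∈ itv a y ∧ y ∈ itv x b) ∨ (y ∈ itv a x ∧ x ∈ itv y b)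

def NoFourCuts (X : Type*) [MetricSpace X] : Prop :=
  ∀ a x y b : X, MSBtw a x y → MSBtw x y b → x ∈ itv a b ∧ y ∈ itv a b

lemma mem_itv_iff {X : Type*} [MetricSpace X] {a b p : X} :
    p ∈ itv a b ↔ dist a p + dist p b = dist a b := Iff.rfl

lemma left_mem_itv {X : Type*} [MetricSpace X] (a b : X) : a ∈ itv a b := by
  simp [itv]

lemma right_mem_itv {X : Type*} [MetricSpace X] (a b : X) : b ∈ itv a b := by
  simp [itv]

lemma itv_subset_left {X : Type*} [MetricSpace X] {a b c : X} (h : b ∈ itv a c) :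
    itv a b ⊆ itv a c := by
  intro p hp
  rw [mem_itv_iff] at *
  have h1 : dist p c ≤ dist p b + dist b c := dist_triangle p b c
  have h2 : dist a c ≤ dist a p + dist p c := dist_triangle a p c
  linarith

lemma itv_subset_right {X : Type*} [MetricSpace X] {a b c : X} (h : b ∈ itv a c) :
    itv b c ⊆ itv a c := by
  intro p hp
  rw [mem_itv_iff] at *
  have h1 : dist a p ≤ dist a b + dist b p := dist_triangle a b p
  have h2 : dist a c ≤ dist a p + dist p c := dist_triangle a p c
  linarith

lemma chain_btw {X : Type*} [MetricSpace X] (hN : NoFourCuts X)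
    {n : ℕ} {x : ℕ → X}
    (hx : ∀ i, 0 < i → i < n → MSBtw (x (i - 1)) (x i) (x (i + 1))) :
    ∀ k, 1 ≤ k → k < n → MSBtw (x 0) (x k) (x (k + 1)) := by
  intro k
  induction k with
  | zero => omega
  | succ k ih =>
    intro _ hk
    rcases Nat.eq_zero_or_pos k with hk0 | hk1
    · subst hk0
      simpa using hx 1 (by omega) (by omega)
    · have h1 : MSBtw (x 0) (x k) (x (k + 1)) := ih hk1 (by omega)
      have h2 : MSBtw (x k) (x (k + 1)) (x (k + 2)) := by
        simpa using hx (k + 1) (by omega) (by omega)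
      have h3 := (hN (x 0) (x k) (x (k + 1)) (x (k + 2)) h1 h2).2
      refine ⟨h3, ?_, h2.2.2⟩
      intro heq
      have hd : dist (x 0) (x k) + dist (x k) (x (k + 1)) = dist (x 0) (x (k + 1)) := h1.1
      have : dist (x 0) (x k) > 0 := dist_pos.mpr h1.2.1
      have : dist (x 0) (x (k + 1)) = 0 := by rw [← heq]; simp
      have hnn : (0:ℝ) ≤ dist (x k) (x (k+1)) := dist_nonneg
      have : dist (x 0) (x k) ≤ 0 := by linarith
      linarith

theorem stmt_5 (X : Type*) [MetricSpace X] :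
    Aligned X ↔ Geodetic X ∧ NoFourCuts X := by
  constructor
  · intro hA
    constructor
    · -- Geodetic
      intro a b x y hx hy
      rw [mem_itv_iff] at hx hy
      by_cases hax : a = x
      · subst hax
        left
        constructor
        · rw [mem_itv_iff]; simp
        · rw [mem_itv_iff]; exact hy
      by_cases hxb : x = b
      · subst hxb
        right
        constructor
        · rw [mem_itv_iff]; exact hy
        · rw [mem_itv_iff]; simp [dist_comm]
      · -- a ≠ x, x ≠ b : use Aligned with chain a, x, b
        set f : ℕ → X := fun i => if i = 0 then a else if i = 1 then x else b with hf
        have hchain : ∀ i, 0 < i → i < 2 → MSBtw (f (i - 1)) (f i) (f (i + 1)) := by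
          intro i hi hi2
          interval_cases i
          simp only [hf]
          norm_num
          exact ⟨hx, hax, hxb⟩
        have heq := hA 2 (by norm_num) f hchain
        have hy' : y ∈ ⋃ i ∈ Finset.range 2, itv (f i) (f (i + 1)) := by
          rw [← heq]
          show y ∈ itv (f 0) (f 2)
          rw [mem_itv_iff]
          simpa [hf] using hy
        simp only [Set.mem_iUnion, Finset.mem_range] at hy'
        obtain ⟨i, hi, hyi⟩ := hy'
        interval_cases i
        · -- y ∈ itv a x
          right
          simp only [hf] at hyi
          norm_num at hyi
          rw [mem_itv_iff] at hyi
          constructor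
          · rw [mem_itv_iff]; exact hyi
          · rw [mem_itv_iff]
            have := dist_comm y x
            have := dist_comm a y
            linarith [dist_comm x y, dist_comm y b]
        · -- y ∈ itv x b
          left
          simp only [hf] at hyi
          norm_num at hyi
          rw [mem_itv_iff] at hyi
          constructor
          · rw [mem_itv_iff]
            linarith [dist_comm x y, dist_comm y x]
          · rw [mem_itv_iff]; exact hyi
    · -- NoFourCuts
      intro a x y b h1 h2
      set f : ℕ → X := fun i => if i = 0 then a else if i = 1 then x else if i = 2 then y else b with hf
      have hchain : ∀ i, 0 < i → i < 3 → MSBtw (f (i - 1)) (f i) (f (i + 1)) := by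
        intro i hi hi2
        interval_cases i
        · simp only [hf]; norm_num; exact h1
        · simp only [hf]; norm_num; exact h2
      have heq := hA 3 (by norm_num) f hchain
      have hsub : ∀ i, i < 3 → itv (f i) (f (i+1)) ⊆ itv a b := by
        intro i hi p hp
        have : p ∈ ⋃ j ∈ Finset.range 3, itv (f j) (f (j + 1)) := by
          simp only [Set.mem_iUnion, Finset.mem_range]
          exact ⟨i, hi, hp⟩
        rw [← heq] at this
        simpa [hf] using this
      constructor
      · have : x ∈ itv (f 0) (f 1) := by
          simp only [hf]; norm_num; exact right_mem_itv a x
        exact hsub 0 (by norm_num) this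
      · have : y ∈ itv (f 2) (f 3) := by
          simp only [hf]; norm_num; exact left_mem_itv y b
        exact hsub 2 (by norm_num) this
  · rintro ⟨hG, hN⟩
    intro n hn
    induction n, hn using Nat.le_induction with
    | base =>
      intro x hx
      simp [Finset.range_one]
    | succ n hn ih =>
      intro x hx
      have hchain : ∀ i, 0 < i → i < n → MSBtw (x (i - 1)) (x i) (x (i + 1)) :=
        fun i hi hi2 => hx i hi (by omega)
      have hIH := ih x hchain
      have hb : MSBtw (x 0) (x n) (x (n + 1)) := chain_btw hN hx n hn (by omega)
      have hmem : x n ∈ itv (x 0) (x (n + 1)) := hb.1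
      have hrange : (⋃ i ∈ Finset.range (n + 1), itv (x i) (x (i + 1)))
          = (⋃ i ∈ Finset.range n, itv (x i) (x (i + 1))) ∪ itv (x n) (x (n + 1)) := by
        rw [Finset.range_add_one]
        rw [Finset.set_biUnion_insert]
        exact Set.union_comm _ _
      rw [hrange, ← hIH]
      apply Set.Subset.antisymm
      · intro p hp
        rcases hG (x 0) (x (n + 1)) p (x n) hp hmem with ⟨h1, _⟩ | ⟨_, h2⟩
        · exact Or.inl h1
        · exact Or.inr h2
      · intro p hp
        rcases hp with hp | hp
        · exact itv_subset_left hmem hp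
        · exact itv_subset_right hmem hp
end

section
/- Closed Carathéodory theorem: if X ⊆ ℝ^N is closed and a ∈ conv(X), then there exist n ≥ 0 and affinely independent points x0,…,xn ∈ X such that a ∈ conv{x0,…,xn} and conv{x0,…,xn} ∩ X = {x0,…,xn}. -/
/-!
Choose `n` minimal such that `a` lies in the convex hull of `n + 1` points of `X`; by
Carathéodory every such tuple is affinely independent. Among the tuples of `n + 1` points of the
compact set `X ∩ conv(x₀)` whose hull contains `a`, pick one minimising the Gram determinant of
the lifts `(xᵢ, 1)`. If its hull contained another point `y = ∑ cᵢ xᵢ` of `X`, some vertex `x_j`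
with `c_j > 0` could be exchanged for `y` keeping `a` in the hull, and this multiplies the
determinant by `c_j² < 1`.
-/

open Set Finset Matrix

section Convex

variable {R E ι : Type*} [Field R] [LinearOrder R] [IsStrictOrderedRing R]
  [AddCommGroup E] [Module R E] [Fintype ι]

theorem eq_single_of_mem_stdSimplex [DecidableEq ι] {c : ι → R} (hc : c ∈ stdSimplex R ι)
    {j : ι} (hcj : c j = 1) : c = Pi.single j 1 := by
  have hrest : ∑ i ∈ univ.erase j, c i = 0 := by
    rw [← add_right_inj (c j), add_sum_erase _ _ (mem_univ j), hc.2, hcj, add_zero]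
  funext i
  rcases eq_or_ne i j with rfl | hij
  · simp [hcj]
  · simp [hij, (sum_eq_zero_iff_of_nonneg fun k _ ↦ hc.1 k).mp hrest i (by simp [hij])]

theorem mem_convexHull_range_iff_exists_stdSimplex {x : ι → E} {a : E} :
    a ∈ convexHull R (range x) ↔ ∃ w ∈ stdSimplex R ι, ∑ i, w i • x i = a := by
  classical
  have hx : range x = Fintype.linearCombination R x '' range fun i ↦ Pi.single i 1 := by
    rw [← range_comp]
    congr 1
    funext i
    simp [Fintype.linearCombination_apply_single]
  rw [hx, ← LinearMap.image_convexHull, convexHull_rangle_single_eq_stdSimplex]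
  simp [Fintype.linearCombination_apply]

theorem exists_pos_mem_convexHull_range_update [DecidableEq ι] {x : ι → E} {a : E}
    {c : ι → R} (hc : c ∈ stdSimplex R ι) (ha : a ∈ convexHull R (range x)) :
    ∃ j, 0 < c j ∧ a ∈ convexHull R (range (Function.update x j (∑ i, c i • x i))) := by
  obtain ⟨w, hw, rfl⟩ := mem_convexHull_range_iff_exists_stdSimplex.mp ha
  have hsupp : {i | 0 < c i}.toFinset.Nonempty := by
    by_contra h
    have hc_nonpos : ∀ i, c i ≤ 0 := by simpa using h
    have hc0 : ∀ i, c i = 0 := fun i ↦ (hc.1 i).antisymm' (hc_nonpos i)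
    simpa [hc0] using hc.2
  -- `t` is the largest step keeping `w - t • c ≥ 0`; it zeroes the weight of `x j`, and the
  -- weight `t` goes to the new vertex.
  obtain ⟨j, hj, hjmin⟩ := Finset.exists_min_image _ (fun i ↦ w i / c i) hsupp
  have hcj : 0 < c j := by simpa using hj
  set t := w j / c j
  have ht : 0 ≤ t := div_nonneg (hw.1 j) hcj.le
  have hle : ∀ i, t * c i ≤ w i := by
    intro i
    rcases (hc.1 i).lt_or_eq with hci | hci
    · exact (le_div_iff₀ hci).mp (hjmin i (by simpa using hci))
    · simpa [← hci] using hw.1 i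
  have htj : w j - t * c j = 0 := by rw [div_mul_cancel₀ _ hcj.ne', sub_self]
  refine ⟨j, hcj, mem_convexHull_range_iff_exists_stdSimplex.mpr
    ⟨fun i ↦ w i - t * c i + (Pi.single j t : ι → R) i, ⟨fun i ↦ ?_, ?_⟩, ?_⟩⟩
  · have := sub_nonneg.mpr (hle i)
    rcases eq_or_ne i j with rfl | hij <;> simp [*]
  · simp [Finset.sum_add_distrib, ← Finset.mul_sum, hw.2, hc.2]
  · have hterm : ∀ i, (w i - t * c i + (Pi.single j t : ι → R) i) •
          Function.update x j (∑ k, c k • x k) i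
        = (w i - t * c i) • x i + (Pi.single j t : ι → R) i • ∑ k, c k • x k := by
      intro i
      rcases eq_or_ne i j with rfl | hij <;> simp [*]
    simp only [hterm, Finset.sum_add_distrib, ← Finset.sum_smul, Finset.sum_pi_single',
      Finset.mem_univ, if_true, sub_smul, mul_smul, Finset.sum_sub_distrib, ← Finset.smul_sum,
      sub_add_cancel]

theorem affineIndependent_of_forall_card_le {x : ι → E} {a : E}
    (ha : a ∈ convexHull R (range x))
    (hmin : ∀ t : Finset E, ↑t ⊆ range x → a ∈ convexHull R (t : Set E) → Fintype.card ι ≤ #t) :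
    AffineIndependent R x := by
  classical
  rw [convexHull_eq_union] at ha
  simp only [mem_iUnion] at ha
  obtain ⟨t, htx, hti, hat⟩ := ha
  have hcard := hmin t htx hat
  have htx' : t ⊆ Finset.univ.image x := fun y hy ↦ by simpa using htx hy
  have hteq : t = Finset.univ.image x :=
    eq_of_subset_of_card_le htx' (card_image_le.trans hcard)
  have hinj : Function.Injective x := by
    rw [← injOn_univ, ← coe_univ, ← card_image_iff]
    exact le_antisymm card_image_le (hteq ▸ hcard)
  have hrange : (t : Set E) = range x := by simp [hteq]
  exact AffineIndependent.of_set_of_injective (hrange ▸ hti) hinj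

theorem exists_fin_forall_affineIndependent_of_mem_convexHull {X : Set E} {a : E}
    (ha : a ∈ convexHull R X) :
    ∃ (n : ℕ) (x₀ : Fin (n + 1) → E), (∀ i, x₀ i ∈ X) ∧ a ∈ convexHull R (range x₀) ∧
      ∀ x : Fin (n + 1) → E, (∀ i, x i ∈ X) → a ∈ convexHull R (range x) →
        AffineIndependent R x := by
  classical
  rw [convexHull_eq_union_convexHull_finite_subsets] at ha
  simp only [mem_iUnion] at ha
  obtain ⟨t₀, ht₀X, ht₀a⟩ := ha
  obtain ⟨t, ⟨htX, hta⟩, ht_min⟩ := (InvImage.wf (#·) wellFounded_lt).has_min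
    {t : Finset E | ↑t ⊆ X ∧ a ∈ convexHull R (t : Set E)} ⟨t₀, ht₀X, ht₀a⟩
  obtain ⟨n, hn⟩ := Nat.exists_eq_add_one_of_ne_zero
    (card_ne_zero.mpr (coe_nonempty.mp (convexHull_nonempty_iff.mp ⟨a, hta⟩)))
  set e := t.equivFinOfCardEq hn
  have hrange : range (fun i ↦ (e.symm i : E)) = t := by
    rw [← Function.comp_def, e.symm.surjective.range_comp, Subtype.range_coe_subtype]
    rfl
  refine ⟨n, fun i ↦ e.symm i, fun i ↦ htX (e.symm i).2, hrange ▸ hta,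
    fun x hxX hxa ↦ affineIndependent_of_forall_card_le hxa fun t' ht' hat' ↦ ?_⟩
  simpa [hn] using not_lt.mp (ht_min t' ⟨ht'.trans (range_subset_iff.mpr hxX), hat'⟩)

end Convex

section Topology

variable {𝕜 E ι : Type*} [Field 𝕜] [LinearOrder 𝕜] [IsStrictOrderedRing 𝕜] [TopologicalSpace 𝕜]
  [OrderClosedTopology 𝕜] [CompactIccSpace 𝕜] [ContinuousAdd 𝕜] [AddCommGroup E] [Module 𝕜 E]
  [TopologicalSpace E] [IsTopologicalAddGroup E] [ContinuousSMul 𝕜 E] [T2Space E] [Fintype ι]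

theorem isClosed_setOf_mem_convexHull_range (a : E) :
    IsClosed {x : ι → E | a ∈ convexHull 𝕜 (range x)} := by
  have : CompactSpace (stdSimplex 𝕜 ι) :=
    isCompact_iff_compactSpace.mp (isCompact_stdSimplex 𝕜 ι)
  have hset : {x : ι → E | a ∈ convexHull 𝕜 (range x)} =
      Prod.snd '' {p : stdSimplex 𝕜 ι × (ι → E) | ∑ i, p.1.1 i • p.2 i = a} := by
    ext x
    simp only [mem_ofPred_eq, mem_convexHull_range_iff_exists_stdSimplex, mem_image,
      Prod.exists, Subtype.exists, exists_prop, exists_eq_right]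
  rw [hset]
  exact isClosedMap_snd_of_compactSpace _ (isClosed_eq (continuous_finsetSum _ fun i _ ↦
    ((continuous_apply i).comp (continuous_subtype_val.comp continuous_fst)).smul
      ((continuous_apply i).comp continuous_snd)) continuous_const)

end Topology

theorem Matrix.gram_sum_smul {𝕜 E ι κ : Type*} [RCLike 𝕜] [SeminormedAddCommGroup E]
    [InnerProductSpace 𝕜 E] [Fintype κ] (B : Matrix ι κ 𝕜) (v : κ → E) :
    gram 𝕜 (fun i ↦ ∑ k, B i k • v k) = B.map star * gram 𝕜 v * Bᵀ := by
  ext i j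
  simp only [gram_apply, mul_apply, map_apply, transpose_apply, sum_inner, inner_sum,
    inner_smul_left, inner_smul_right, Finset.sum_mul, Finset.mul_sum]
  refine Finset.sum_congr rfl fun k _ ↦ Finset.sum_congr rfl fun l _ ↦ ?_
  simp only [RCLike.star_def]
  ring

theorem Matrix.det_one_updateRow {R n : Type*} [CommRing R] [Fintype n] [DecidableEq n]
    (j : n) (c : n → R) : ((1 : Matrix n n R).updateRow j c).det = c j := by
  have hc : c = ∑ k, c k • (1 : Matrix n n R) k := by
    ext l
    simp [one_apply]
  rw [hc, det_updateRow_sum]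
  simp [one_apply]

/-- Affine relations among points of `E` are linear relations among their lifts. -/
def affineLift {E : Type*} (p : E) : WithLp 2 (E × ℝ) := WithLp.toLp 2 (p, 1)

section AffineGram

variable {E ι : Type*} [NormedAddCommGroup E]

theorem continuous_affineLift : Continuous (affineLift : E → WithLp 2 (E × ℝ)) := by
  unfold affineLift
  fun_prop

variable [InnerProductSpace ℝ E]

theorem affineLift_sum_smul [Fintype ι] {w : ι → ℝ} (hw : ∑ i, w i = 1) (x : ι → E) :
    affineLift (∑ i, w i • x i) = ∑ i, w i • affineLift (x i) := by
  apply (WithLp.linearEquiv 2 ℝ (E × ℝ)).injective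
  simp [affineLift, Prod.ext_iff, Prod.fst_sum, Prod.snd_sum, hw]

theorem AffineIndependent.linearIndependent_affineLift {x : ι → E}
    (hx : AffineIndependent ℝ x) : LinearIndependent ℝ (affineLift ∘ x) := by
  rw [linearIndependent_iff']
  intro s g hg
  have hfst := congrArg (fun v ↦ (WithLp.ofLp v).1) hg
  have hsnd := congrArg (fun v ↦ (WithLp.ofLp v).2) hg
  simp only [WithLp.ofLp_sum, Prod.fst_sum, Prod.snd_sum, Function.comp_apply, affineLift,
    WithLp.ofLp_smul, Prod.smul_fst, Prod.smul_snd, smul_eq_mul, mul_one,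
    WithLp.ofLp_zero, Prod.fst_zero, Prod.snd_zero] at hfst hsnd
  exact hx.eq_zero_of_sum_eq_zero hsnd hfst

variable [Fintype ι] [DecidableEq ι]

noncomputable def affineGramDet (x : ι → E) : ℝ := (gram ℝ (affineLift ∘ x)).det

theorem AffineIndependent.affineGramDet_pos {x : ι → E} (hx : AffineIndependent ℝ x) :
    0 < affineGramDet x :=
  (posDef_gram_of_linearIndependent hx.linearIndependent_affineLift).det_pos

theorem continuous_affineGramDet : Continuous (affineGramDet : (ι → E) → ℝ) :=
  Continuous.matrix_det <| continuous_matrix fun i j ↦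
    show Continuous fun x : ι → E ↦ inner ℝ (affineLift (x i)) (affineLift (x j)) from
      (continuous_affineLift.comp (continuous_apply i)).inner
        (continuous_affineLift.comp (continuous_apply j))

theorem affineGramDet_update_sum_smul (x : ι → E) {c : ι → ℝ} (hc : ∑ i, c i = 1) (j : ι) :
    affineGramDet (Function.update x j (∑ i, c i • x i)) = c j ^ 2 * affineGramDet x := by
  set B := (1 : Matrix ι ι ℝ).updateRow j c
  have hlift : affineLift ∘ Function.update x j (∑ i, c i • x i) =
      fun i ↦ ∑ k, B i k • (affineLift ∘ x) k := by
    funext i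
    rcases eq_or_ne i j with rfl | hij
    · simp [B, affineLift_sum_smul hc]
    · simp [B, hij, one_apply]
  have hBstar : B.map star = B := by ext; simp
  rw [affineGramDet, hlift, gram_sum_smul, hBstar, det_mul, det_mul, det_transpose,
    det_one_updateRow, affineGramDet]
  ring

def surroundingTuples (S : Set E) (a : E) : Set (ι → E) :=
  {x | (∀ i, x i ∈ S) ∧ a ∈ convexHull ℝ (range x)}

omit [DecidableEq ι] in
theorem isCompact_surroundingTuples {S : Set E} (hS : IsCompact S) (a : E) :
    IsCompact (surroundingTuples S a : Set (ι → E)) := by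
  have hset : (surroundingTuples S a : Set (ι → E)) =
      (Set.univ.pi fun _ ↦ S) ∩ {x | a ∈ convexHull ℝ (range x)} := by
    ext x
    simp [surroundingTuples]
  rw [hset]
  exact (isCompact_univ_pi fun _ ↦ hS).inter_right (isClosed_setOf_mem_convexHull_range a)

/-- Replacing `x j` by `y = ∑ cᵢ xᵢ` multiplies `affineGramDet` by `c_j²`, which is `< 1` unless
`y = x j`. -/
theorem mem_range_of_isMinOn_affineGramDet {S : Set E} {a : E} {x : ι → E}
    (hmin : IsMinOn affineGramDet (surroundingTuples S a) x) (hx : x ∈ surroundingTuples S a)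
    (hpos : 0 < affineGramDet x) {y : E} (hyS : y ∈ S) (hy : y ∈ convexHull ℝ (range x)) :
    y ∈ range x := by
  obtain ⟨c, hc, rfl⟩ := mem_convexHull_range_iff_exists_stdSimplex.mp hy
  obtain ⟨j, hcj, ha⟩ := exists_pos_mem_convexHull_range_update hc hx.2
  have hupdate : Function.update x j (∑ i, c i • x i) ∈ surroundingTuples S a := by
    refine ⟨fun i ↦ ?_, ha⟩
    rcases eq_or_ne i j with rfl | hij
    · simpa using hyS
    · simpa [hij] using hx.1 i
  have hle := hmin hupdate
  rw [mem_ofPred_eq, affineGramDet_update_sum_smul x hc.2 j] at hle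
  have hcj1 : c j = 1 := by
    refine le_antisymm (mem_Icc_of_mem_stdSimplex hc j).2 (not_lt.mp fun hlt ↦ ?_)
    exact hle.not_gt (mul_lt_of_lt_one_left hpos (pow_lt_one₀ hcj.le hlt two_ne_zero))
  refine ⟨j, ?_⟩
  simp [eq_single_of_mem_stdSimplex hc hcj1]

end AffineGram

theorem stmt_6 {N : ℕ} (X : Set (EuclideanSpace ℝ (Fin N))) (hX : IsClosed X)
    (a : EuclideanSpace ℝ (Fin N)) (ha : a ∈ convexHull ℝ X) :
    ∃ (n : ℕ) (x : Fin (n + 1) → EuclideanSpace ℝ (Fin N)),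
      AffineIndependent ℝ x ∧ (∀ i, x i ∈ X) ∧
      a ∈ convexHull ℝ (Set.range x) ∧
      convexHull ℝ (Set.range x) ∩ X = Set.range x := by
  obtain ⟨n, x₀, hx₀X, hx₀a, hindep⟩ := exists_fin_forall_affineIndependent_of_mem_convexHull ha
  set S := X ∩ convexHull ℝ (range x₀)
  have hS : IsCompact S := ((finite_range x₀).isCompact_convexHull (𝕜 := ℝ)).inter_left hX
  obtain ⟨x, hxK, hxmin⟩ := (isCompact_surroundingTuples hS a).exists_isMinOn
    ⟨x₀, fun i ↦ ⟨hx₀X i, subset_convexHull ℝ _ (mem_range_self i)⟩, hx₀a⟩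
    continuous_affineGramDet.continuousOn
  have hxX : ∀ i, x i ∈ X := fun i ↦ (hxK.1 i).1
  have hx := hindep x hxX hxK.2
  refine ⟨n, x, hx, hxX, hxK.2, subset_antisymm ?_ ?_⟩
  · rintro y ⟨hy, hyX⟩
    have hyS : y ∈ S := ⟨hyX, convexHull_min (range_subset_iff.mpr fun i ↦ (hxK.1 i).2)
      (convex_convexHull ℝ _) hy⟩
    exact mem_range_of_isMinOn_affineGramDet hxmin hxK hx.affineGramDet_pos hyS hy
  · rintro _ ⟨i, rfl⟩
    exact ⟨subset_convexHull ℝ _ (mem_range_self i), hxX i⟩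
end

section
/- For a closed subset X of ℝ^N, the convex hull of X equals X ∪ conv(ρX), where ρX is the inner boundary of X; similarly the closed convex hull of X equals X ∪ cconv(ρX). -/
/-!
Let `z ∈ conv X \ X`. Then `z` lies in the hull of the compact set `K = X ∩ conv t` for some
finite `t ⊆ X`; among all ways of writing `z = ∑ wᵢ yᵢ` with `yᵢ ∈ K` (over a fixed finite index
type) pick one minimising `∑ wᵢ ‖yᵢ - z‖`. If some `yᵢ` with `wᵢ > 0` were approached by points of
`K` along every segment `(yᵢ, yⱼ)`, replacing `yᵢ` by such a point `p` and shifting to it a little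
of the weight of `yⱼ` would change the cost by
`(wᵢ + δ)‖p - z‖ - wᵢ‖yᵢ - z‖ - δ‖yⱼ - z‖ ≤ 0`, with equality only if `yᵢ - z` and `yⱼ - z` lie
on a common ray (strict convexity). Since the `wⱼ (yⱼ - z)` sum to zero, not all of them do. So
every `yᵢ` sees another point of `K` across a segment missing `K`, and as `conv t` is convex the
two points are adjacent in `X`. The closed hull statement follows by taking closures.
-/

open Set AffineMap

/-- Two points of the set `X` are adjacent: they are distinct and no point of `X`
lies strictly between them. -/
def AdjIn {E : Type*} [MetricSpace E] (X : Set E) (x y : E) : Prop :=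
  x ∈ X ∧ y ∈ X ∧ x ≠ y ∧
    ¬ ∃ p ∈ X, p ≠ x ∧ p ≠ y ∧ dist x p + dist p y = dist x y

/-- The inner boundary of the set `X`: points adjacent to some other point of `X`. -/
def innerBdry {E : Type*} [MetricSpace E] (X : Set E) : Set E :=
  {x | ∃ y, AdjIn X x y}

variable {E : Type*} [NormedAddCommGroup E] [NormedSpace ℝ E]

def segmentInnerBdry (K : Set E) : Set E :=
  {a | a ∈ K ∧ ∃ b ∈ K, a ≠ b ∧ Disjoint (openSegment ℝ a b) K}

theorem exists_lineMap_mem_of_notMem_segmentInnerBdry {K : Set E} (hK : IsClosed K) {a b : E}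
    (ha : a ∈ K) (hb : b ∈ K) (hab : a ≠ b) (haK : a ∉ segmentInnerBdry K)
    {ε : ℝ} (hε₀ : 0 < ε) (hε₁ : ε ≤ 1) : ∃ s, 0 < s ∧ s < ε ∧ lineMap a b s ∈ K := by
  by_contra! hgap
  obtain ⟨s₀, ⟨⟨hεs₀, hs₀₁⟩, hs₀K⟩, hs₀min⟩ :=
    (isCompact_Icc.inter_right (hK.preimage (by fun_prop : Continuous (lineMap a b : ℝ → E))))
      |>.exists_isLeast ⟨1, ⟨hε₁, le_rfl⟩, by simpa using hb⟩
  have hs₀ : 0 < s₀ := hε₀.trans_le hεs₀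
  refine haK ⟨ha, lineMap a b s₀, hs₀K, (by simp [hab, hs₀.ne'] : lineMap a b s₀ ≠ a).symm, ?_⟩
  rw [openSegment_eq_image_lineMap, Set.disjoint_left]
  rintro _ ⟨t, ⟨ht₀, ht₁⟩, rfl⟩ htK
  rw [lineMap_lineMap_right] at htK
  have hts₀ : t * s₀ < s₀ := mul_lt_of_lt_one_left hs₀ ht₁
  by_cases htε : t * s₀ < ε
  · exact hgap _ (mul_pos ht₀ hs₀) htε htK
  · exact hts₀.not_ge (hs₀min ⟨⟨not_lt.1 htε, hts₀.le.trans hs₀₁⟩, htK⟩)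

theorem Fintype.sum_smul_update_transfer {ι R α M : Type*} [Fintype ι] [DecidableEq ι] [Ring R]
    [AddCommGroup M] [Module R M] (w : ι → R) (y : ι → α) (φ : α → M) {i j : ι} (hij : i ≠ j)
    (δ : R) (p : α) :
    ∑ k, (w + Pi.single i δ - Pi.single j δ : ι → R) k • φ (Function.update y i p k) =
      ∑ k, w k • φ (y k) + ((w i + δ) • φ p - w i • φ (y i) - δ • φ (y j)) := by
  rw [← sub_eq_iff_eq_add', ← Finset.sum_sub_distrib,
    Fintype.sum_eq_add i j hij fun k hk => by simp [hk.1, hk.2]]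
  simp [hij, hij.symm, add_smul, sub_smul]
  abel

variable {ι : Type*} [Fintype ι]

variable (ι) in
def convexReps (K : Set E) (z : E) : Set ((ι → ℝ) × (ι → E)) :=
  {r | r.1 ∈ stdSimplex ℝ ι ∧ (∀ i, r.2 i ∈ K) ∧ ∑ i, r.1 i • r.2 i = z}

def repCost (z : E) (r : (ι → ℝ) × (ι → E)) : ℝ :=
  ∑ i, r.1 i • ‖r.2 i - z‖

theorem isCompact_convexReps {K : Set E} (hK : IsCompact K) (z : E) :
    IsCompact (convexReps ι K z) := by
  have hbarycenter : IsClosed {r : (ι → ℝ) × (ι → E) | ∑ i, r.1 i • r.2 i = z} :=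
    isClosed_eq (by fun_prop) continuous_const
  convert ((isCompact_stdSimplex ℝ ι).prod (isCompact_univ_pi fun _ => hK)).inter_right
    hbarycenter using 1
  ext r
  simp [convexReps, and_assoc]

theorem sameRay_of_isMinOn_repCost [StrictConvexSpace ℝ E] {K : Set E} (hK : IsClosed K)
    {z : E} {r : (ι → ℝ) × (ι → E)} (hr : r ∈ convexReps ι K z)
    (hmin : IsMinOn (repCost z) (convexReps ι K z) r) {i j : ι} (hi : 0 < r.1 i)
    (hj : 0 < r.1 j) (hbad : r.2 i ∉ segmentInnerBdry K) :
    SameRay ℝ (r.2 i - z) (r.2 j - z) := by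
  classical
  obtain ⟨w, y⟩ := r
  obtain ⟨⟨hw₀, hw₁⟩, hyK, hyz⟩ := hr
  dsimp only at *
  by_cases hyij : y i = y j
  · rw [hyij]
  have hij : i ≠ j := fun h => hyij (congrArg y h)
  obtain ⟨s, hs₀, hsj, hpK⟩ := exists_lineMap_mem_of_notMem_segmentInnerBdry hK (hyK i) (hyK j)
    hyij hbad (div_pos hj (add_pos hi hj)) (div_le_one_of_le₀ (by linarith) (by positivity))
  have hs₁ : s < 1 := hsj.trans_le (div_le_one_of_le₀ (by linarith) (by positivity))
  set p := lineMap (y i) (y j) s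
  set δ := w i * s / (1 - s)
  have hδ₀ : 0 < δ := by positivity
  have hδj : δ < w j := by
    rw [lt_div_iff₀ (by linarith)] at hsj
    rw [div_lt_iff₀ (by linarith)]
    linarith
  have hp : (w i + δ) • p = w i • y i + δ • y j := by
    have hs : 1 - s ≠ 0 := (sub_pos.2 hs₁).ne'
    have h₁ : (w i + δ) * (1 - s) = w i := by simp only [δ]; field_simp; ring
    have h₂ : (w i + δ) * s = δ := by simp only [δ]; field_simp; ring
    rw [show p = (1 - s) • y i + s • y j from lineMap_apply_module _ _ _, smul_add, smul_smul,
      smul_smul, h₁, h₂]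
  have hr' : (w + Pi.single i δ - Pi.single j δ, Function.update y i p) ∈ convexReps ι K z := by
    refine ⟨⟨fun k => ?_, ?_⟩, fun k => ?_, ?_⟩
    · rcases eq_or_ne k i with rfl | hki
      · simp [hij]; linarith
      rcases eq_or_ne k j with rfl | hkj
      · simp [hki]; linarith
      · simp [hki, hkj, hw₀ k]
    · simpa [hw₁] using Fintype.sum_smul_update_transfer w y (fun _ => (1 : ℝ)) hij δ p
    · rcases eq_or_ne k i with rfl | hki
      · simpa using hpK
      · simpa [hki] using hyK k
    · simpa [hyz, hp] using Fintype.sum_smul_update_transfer w y id hij δ p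
  have hcost : repCost z (w, y) ≤ repCost z _ := hmin hr'
  simp only [repCost] at hcost
  rw [Fintype.sum_smul_update_transfer w y (fun x => ‖x - z‖) hij δ p] at hcost
  have hpz : (w i + δ) • (p - z) = w i • (y i - z) + δ • (y j - z) := by
    rw [smul_sub, hp]; module
  have htri : ‖w i • (y i - z) + δ • (y j - z)‖ = ‖w i • (y i - z)‖ + ‖δ • (y j - z)‖ := by
    refine le_antisymm (norm_add_le _ _) ?_
    rw [← hpz, norm_smul, norm_smul, norm_smul, Real.norm_of_nonneg hi.le,
      Real.norm_of_nonneg hδ₀.le, Real.norm_of_nonneg (by positivity)]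
    simp only [smul_eq_mul] at hcost
    linarith
  simpa [smul_smul, hi.ne', hδ₀.ne'] using (sameRay_iff_norm_add.2 htri).pos_smul_left
    (inv_pos.2 hi) |>.pos_smul_right (inv_pos.2 hδ₀)

theorem exists_pos_not_sameRay_of_sum_smul_eq_zero {M : Type*} [AddCommGroup M] [Module ℝ M]
    {w : ι → ℝ} {v : ι → M} (hw : ∀ k, 0 ≤ w k) (hsum : ∑ k, w k • v k = 0) {i : ι}
    (hi : 0 < w i) (hv : v i ≠ 0) : ∃ j, 0 < w j ∧ ¬SameRay ℝ (v i) (v j) := by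
  by_contra! hray
  have hcoef : ∀ k, ∃ c : ℝ, 0 ≤ c ∧ w k • v k = c • v i := by
    intro k
    rcases (hw k).eq_or_lt with hk | hk
    · exact ⟨0, le_rfl, by simp [← hk]⟩
    · obtain ⟨r, hr, hrv⟩ := (hray k hk).exists_nonneg_left hv
      exact ⟨w k * r, mul_nonneg hk.le hr, by rw [← hrv, smul_smul]⟩
  choose c hc₀ hc using hcoef
  have hci : c i = w i := smul_left_injective ℝ hv (hc i).symm
  rw [Fintype.sum_congr _ _ hc, ← Finset.sum_smul, smul_eq_zero] at hsum
  refine hsum.elim (fun h => ?_) hv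
  have := Finset.single_le_sum (fun k _ => hc₀ k) (Finset.mem_univ i)
  linarith

theorem mem_convexHull_segmentInnerBdry [StrictConvexSpace ℝ E] {K : Set E} (hK : IsCompact K)
    {z : E} (hzK : z ∈ convexHull ℝ K) (hz : z ∉ K) : z ∈ convexHull ℝ (segmentInnerBdry K) := by
  obtain ⟨ι, _, w, y, hw₀, hw₁, hyK, hyz⟩ := mem_convexHull_iff_exists_fintype.1 hzK
  obtain ⟨⟨W, Y⟩, ⟨⟨hW₀, hW₁⟩, hYK, hYz⟩, hmin⟩ := (isCompact_convexReps hK z).exists_isMinOn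
    ⟨(w, y), ⟨hw₀, hw₁⟩, hyK, hyz⟩
    (by unfold repCost; fun_prop : Continuous (repCost (ι := ι) z)).continuousOn
  have hsum : ∑ k, W k • (Y k - z) = 0 := by
    simp [smul_sub, Finset.sum_sub_distrib, hYz, ← Finset.sum_smul, hW₁]
  have hgood : ∀ i, W i ≠ 0 → Y i ∈ segmentInnerBdry K := by
    intro i hi
    by_contra hbad
    obtain ⟨j, hj, hray⟩ := exists_pos_not_sameRay_of_sum_smul_eq_zero hW₀ hsum
      ((hW₀ i).lt_of_ne' hi) (sub_ne_zero.2 fun h => hz (h ▸ hYK i))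
    exact hray (sameRay_of_isMinOn_repCost hK.isClosed ⟨⟨hW₀, hW₁⟩, hYK, hYz⟩ hmin
      ((hW₀ i).lt_of_ne' hi) hj hbad)
  rw [← hYz, ← finsum_eq_sum_of_fintype]
  exact (convex_convexHull ℝ _).finsum_mem hW₀ (by rwa [finsum_eq_sum_of_fintype])
    fun i hi => subset_convexHull ℝ _ (hgood i hi)

theorem segmentInnerBdry_inter_subset_innerBdry [StrictConvexSpace ℝ E] (X : Set E) {P : Set E}
    (hP : Convex ℝ P) : segmentInnerBdry (X ∩ P) ⊆ innerBdry X := by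
  rintro a ⟨⟨haX, haP⟩, b, ⟨hbX, hbP⟩, hab, hdisj⟩
  refine ⟨b, haX, hbX, hab, ?_⟩
  rintro ⟨p, hpX, hpa, hpb, hdist⟩
  have hp : p ∈ segment ℝ a b := mem_segment_iff_wbtw.2 (dist_add_dist_eq_iff.1 hdist)
  exact hdisj.notMem_of_mem_left (mem_openSegment_of_ne_left_right hpa.symm hpb.symm hp)
    ⟨hpX, hP.segment_subset haP hbP hp⟩

theorem convexHull_eq_union_convexHull_innerBdry [StrictConvexSpace ℝ E] {X : Set E}
    (hX : IsClosed X) : convexHull ℝ X = X ∪ convexHull ℝ (innerBdry X) := by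
  refine subset_antisymm (fun z hz => or_iff_not_imp_left.2 fun hzX => ?_)
    (union_subset (subset_convexHull ℝ X) (convexHull_mono fun _ ⟨_, h⟩ => h.1))
  obtain ⟨t, htX, hzt⟩ :=
    mem_iUnion₂.1 ((convexHull_eq_union_convexHull_finite_subsets X).subset hz)
  have hK : IsCompact (X ∩ convexHull ℝ t) :=
    (t.finite_toSet.isCompact_convexHull (𝕜 := ℝ)).inter_left hX
  exact convexHull_mono (segmentInnerBdry_inter_subset_innerBdry X (convex_convexHull ℝ _))
    (mem_convexHull_segmentInnerBdry hK
      (convexHull_mono (subset_inter htX (subset_convexHull ℝ _)) hzt) fun h => hzX h.1)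

theorem stmt_7 {N : ℕ} (X : Set (EuclideanSpace ℝ (Fin N))) (hX : IsClosed X) :
    convexHull ℝ X = X ∪ convexHull ℝ (innerBdry X) ∧
    closure (convexHull ℝ X) = X ∪ closure (convexHull ℝ (innerBdry X)) := by
  have hconv := convexHull_eq_union_convexHull_innerBdry hX
  refine ⟨hconv, ?_⟩
  rw [hconv, closure_union, hX.closure_eq]
end

section
/- Let f : X → Y and g : Y → X be 1-Lipschitz maps of metric spaces with g(f(x)) = x for all x in the inner boundary ρX. Then f sends adjacent points of X to adjacent points of Y, and f(ρX) ⊆ ρY. -/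
/-- Two points of a metric space are adjacent: distinct, with no point strictly
between them. -/
def Adjacent {X : Type*} [MetricSpace X] (x y : X) : Prop :=
  x ≠ y ∧ ¬ ∃ p, p ≠ x ∧ p ≠ y ∧ dist x p + dist p y = dist x y

/-- The inner boundary of a metric space. -/
def innerBoundary (X : Type*) [MetricSpace X] : Set X :=
  {x | ∃ y, Adjacent x y}

lemma Adjacent.symm' {X : Type*} [MetricSpace X] {x y : X} (h : Adjacent x y) :
    Adjacent y x := by
  obtain ⟨hne, hno⟩ := h
  refine ⟨hne.symm, fun ⟨p, hpy, hpx, hd⟩ => hno ⟨p, hpx, hpy, ?_⟩⟩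
  rw [dist_comm x p, dist_comm p y, dist_comm x y, add_comm]
  exact hd

theorem stmt_8 {X Y : Type*} [MetricSpace X] [MetricSpace Y]
    (f : X → Y) (g : Y → X)
    (hf : ∀ x x' : X, dist (f x) (f x') ≤ dist x x')
    (hg : ∀ y y' : Y, dist (g y) (g y') ≤ dist y y')
    (hgf : ∀ x ∈ innerBoundary X, g (f x) = x) :
    (∀ x x' : X, Adjacent x x' → Adjacent (f x) (f x')) ∧
    f '' innerBoundary X ⊆ innerBoundary Y := by
  have main : ∀ x x' : X, Adjacent x x' → Adjacent (f x) (f x') := by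
    intro x x' hadj
    have hxB : x ∈ innerBoundary X := ⟨x', hadj⟩
    have hx'B : x' ∈ innerBoundary X := ⟨x, hadj.symm'⟩
    have hgx : g (f x) = x := hgf x hxB
    have hgx' : g (f x') = x' := hgf x' hx'B
    have hfne : f x ≠ f x' := by
      intro h
      exact hadj.1 (by rw [← hgx, ← hgx', h])
    refine ⟨hfne, ?_⟩
    rintro ⟨q, hq1, hq2, hq3⟩
    set p := g q with hp
    have ha : dist x p ≤ dist (f x) q := by
      have := hg (f x) q; rwa [hgx] at this
    have hb : dist p x' ≤ dist q (f x') := by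
      have := hg q (f x'); rwa [hgx'] at this
    have htri : dist x x' ≤ dist x p + dist p x' := dist_triangle x p x'
    have hff : dist (f x) (f x') ≤ dist x x' := hf x x'
    -- equalities
    have heq : dist x p + dist p x' = dist x x' := by linarith
    have ha' : dist x p = dist (f x) q := by linarith
    have hb' : dist p x' = dist q (f x') := by linarith
    have hpx : p ≠ x := by
      intro h
      apply hq1
      rw [← dist_eq_zero]
      have : dist x p = 0 := by rw [h, dist_self]
      rw [dist_comm]
      linarith
    have hpx' : p ≠ x' := by
      intro h
      apply hq2
      rw [← dist_eq_zero]
      have : dist p x' = 0 := by rw [h, dist_self]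
      linarith
    exact hadj.2 ⟨p, hpx, hpx', heq⟩
  refine ⟨main, ?_⟩
  rintro y ⟨x, ⟨x', hadj⟩, rfl⟩
  exact ⟨f x', main x x' hadj⟩
end

section
/- Let X ⊆ ℝ^N be closed, and let x0,…,xn ∈ X be affinely independent with conv{x0,…,xn} ∩ ρX ⊆ {x0,…,xn}. Then either conv{x0,…,xn} ⊆ X, or conv{x0,…,xn} ∩ X = {x0,…,xn}. -/
open Set

section ExtremePoints

variable {𝕜 E : Type*} [Field 𝕜] [LinearOrder 𝕜] [IsStrictOrderedRing 𝕜] [AddCommGroup E]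
  [Module 𝕜 E]

theorem mem_extremePoints_convexHull_insert {A : Set E} {x : E} (hx : x ∉ affineSpan 𝕜 A) :
    x ∈ (convexHull 𝕜 (insert x A)).extremePoints 𝕜 := by
  rcases A.eq_empty_or_nonempty with rfl | hA
  · simp [extremePoints_singleton]
  rw [convexHull_insert hA]
  refine ⟨mem_convexJoin.2 ⟨x, rfl, hA.convexHull.some, hA.convexHull.some_mem,
    left_mem_segment 𝕜 _ _⟩, ?_⟩
  rintro _ hp' _ hq' ⟨a, b, ha, hb, hab, hxpq⟩
  obtain ⟨y, hy, p, hp, s₁, s, hs₁, hs, hss, rfl⟩ := mem_convexJoin.1 hp'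
  obtain ⟨z, hz, q, hq, t₁, t, ht₁, ht, htt, rfl⟩ := mem_convexJoin.1 hq'
  rw [mem_singleton_iff] at hy hz
  subst y z
  -- Unless `s = t = 0`, `x` is the convex combination `(a s p + b t q) / (a s + b t)` of points
  -- of `convexHull A`.
  have hst : a * s + b * t = 0 := by
    by_contra hne
    refine hx (convexHull_subset_affineSpan A ((convex_convexHull 𝕜 A).segment_subset hp hq
      ⟨a * s / (a * s + b * t), b * t / (a * s + b * t), by positivity, by positivity,
        by field_simp, ?_⟩))
    have hcomb : (a * s + b * t) • x = (a * s) • p + (b * t) • q := by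
      obtain rfl : s₁ = 1 - s := by linarith
      obtain rfl : t₁ = 1 - t := by linarith
      obtain rfl : b = 1 - a := by linarith
      linear_combination (norm := module) -hxpq
    rw [div_eq_inv_mul, div_eq_inv_mul, mul_smul _ (a * s), mul_smul _ (b * t), ← smul_add,
      ← hcomb, smul_smul, inv_mul_cancel₀ hne, one_smul]
  obtain ⟨rfl, rfl⟩ : s = 0 ∧ t = 0 := by
    constructor <;> nlinarith [mul_nonneg ha.le hs, mul_nonneg hb.le ht]
  obtain ⟨rfl, rfl⟩ : s₁ = 1 ∧ t₁ = 1 := ⟨by linarith, by linarith⟩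
  simp

theorem AffineIndependent.extremePoints_convexHull {ι : Type*} {p : ι → E}
    (hp : AffineIndependent 𝕜 p) : (convexHull 𝕜 (range p)).extremePoints 𝕜 = range p := by
  refine extremePoints_convexHull_subset.antisymm (range_subset_iff.2 fun i => ?_)
  have hrange : insert (p i) (p '' (univ \ {i})) = range p := by
    rw [← image_insert_eq, insert_sdiff_singleton, insert_eq_of_mem (mem_univ i), image_univ]
  simpa only [hrange] using mem_extremePoints_convexHull_insert (hp.notMem_affineSpan_sdiff i univ)

end ExtremePoints

theorem IsClosed.exists_gap {α : Type*} [ConditionallyCompleteLinearOrder α] [TopologicalSpace α]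
    [OrderTopology α] {Y : Set α} (hY : IsClosed Y) {a b t : α} (hat : a ≤ t) (htb : t ≤ b)
    (ha : a ∈ Y) (hb : b ∈ Y) (ht : t ∉ Y) :
    ∃ s ∈ Y, ∃ r ∈ Y, a ≤ s ∧ s < r ∧ r ≤ b ∧ ∀ u ∈ Y, u ∉ Ioo s r := by
  obtain ⟨s, ⟨hsY, has, hst⟩, hs_max⟩ :=
    (isCompact_Icc.inter_left hY).exists_isGreatest ⟨a, ha, le_rfl, hat⟩
  obtain ⟨r, ⟨hrY, htr, hrb⟩, hr_min⟩ :=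
    (isCompact_Icc.inter_left hY).exists_isLeast ⟨b, hb, htb, le_rfl⟩
  have hst' : s < t := lt_of_le_of_ne hst fun h => ht (h ▸ hsY)
  have htr' : t < r := lt_of_le_of_ne htr fun h => ht (h ▸ hrY)
  refine ⟨s, hsY, r, hrY, has, hst'.trans htr', hrb, fun u huY hu => ?_⟩
  rcases le_total u t with hut | htu
  · exact (hs_max ⟨huY, has.trans hu.1.le, hut⟩).not_gt hu.1
  · exact (hr_min ⟨huY, htu, hu.2.le.trans hrb⟩).not_gt hu.2

section NormedSpace

variable {E : Type*} [NormedAddCommGroup E] [NormedSpace ℝ E] {K X : Set E}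

theorem IsClosed.setOf_segment_subset (hX : IsClosed X) (c : E) :
    IsClosed {y | segment ℝ y c ⊆ X} := by
  have hset : {y | segment ℝ y c ⊆ X} =
      ⋂ θ ∈ Icc (0 : ℝ) 1, (fun y => (1 - θ) • y + θ • c) ⁻¹' X := by
    ext y
    simp only [segment_eq_image, image_subset_iff, mem_iInter]
    rfl
  rw [hset]
  exact isClosed_biInter fun θ _ => hX.preimage (by fun_prop)

theorem IsClosed.exists_adjIn_of_mem_segment [StrictConvexSpace ℝ E] (hX : IsClosed X)
    {b c w : E} (hb : b ∈ X) (hc : c ∈ X) (hw : w ∈ segment ℝ b c) (hwX : w ∉ X) :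
    ∃ u v, AdjIn X u v ∧ u ∈ segment ℝ b v ∧ v ∈ segment ℝ b c := by
  have hbc : b ≠ c := by
    rintro rfl
    rw [segment_same, mem_singleton_iff] at hw
    exact hwX (hw ▸ hb)
  set f : ℝ →ᵃ[ℝ] E := AffineMap.lineMap b c
  have hf0 : f 0 = b := AffineMap.lineMap_apply_zero b c
  have hf1 : f 1 = c := AffineMap.lineMap_apply_one b c
  rw [segment_eq_image_lineMap] at hw
  obtain ⟨t, ⟨ht0, ht1⟩, rfl⟩ := hw
  obtain ⟨s, hsX, r, hrX, hs0, hsr, hr1, hgap⟩ :=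
    (hX.preimage AffineMap.lineMap_continuous).exists_gap ht0 ht1
      (show f 0 ∈ X from hf0 ▸ hb) (show f 1 ∈ X from hf1 ▸ hc) hwX
  refine ⟨f s, f r, ⟨hsX, hrX, (AffineMap.lineMap_injective ℝ hbc).ne hsr.ne, ?_⟩, ?_, ?_⟩
  · rintro ⟨p, hpX, hps, hpr, hd⟩
    obtain ⟨τ, hτ, rfl⟩ : p ∈ f '' segment ℝ s r := by
      rw [image_segment]
      exact (dist_add_dist_eq_iff.1 hd).mem_segment
    rw [segment_eq_Icc hsr.le] at hτ
    exact hgap τ hpX ⟨hτ.1.lt_of_ne fun h => hps (h ▸ rfl), hτ.2.lt_of_ne fun h => hpr (h ▸ rfl)⟩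
  · rw [← hf0, ← image_segment, segment_eq_Icc (hs0.trans hsr.le)]
    exact mem_image_of_mem f ⟨hs0, hsr.le⟩
  · rw [← hf0, ← hf1, ← image_segment, segment_eq_Icc zero_le_one]
    exact mem_image_of_mem f ⟨hs0.trans hsr.le, hr1⟩

theorem Convex.segment_subset_of_notMem_extremePoints [StrictConvexSpace ℝ E] (hK : Convex ℝ K)
    (hX : IsClosed X) (hib : K ∩ innerBdry X ⊆ K.extremePoints ℝ) {a c : E} (ha : a ∈ K ∩ X)
    (ha' : a ∉ K.extremePoints ℝ) (hc : c ∈ K ∩ X) : segment ℝ a c ⊆ X := by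
  intro w hw
  by_contra hwX
  obtain ⟨u, v, huv, hu, hv⟩ := hX.exists_adjIn_of_mem_segment ha.2 hc.2 hw hwX
  have hvK : v ∈ K := hK.segment_subset ha.1 hc.1 hv
  have hu_ext : u ∈ K.extremePoints ℝ := hib ⟨hK.segment_subset ha.1 hvK hu, v, huv⟩
  rcases (mem_extremePoints_iff_forall_segment.1 hu_ext).2 a ha.1 v hvK hu with rfl | rfl
  · exact ha' hu_ext
  · exact huv.2.2.1 rfl

theorem Convex.inter_of_innerBdry_subset_extremePoints [StrictConvexSpace ℝ E]
    (hK : Convex ℝ K) (hX : IsClosed X) (hib : K ∩ innerBdry X ⊆ K.extremePoints ℝ) {a : E}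
    (ha : a ∈ K ∩ X) (ha' : a ∉ K.extremePoints ℝ) : Convex ℝ (K ∩ X) := by
  refine convex_iff_segment_subset.2 fun b hb c hc => subset_inter (hK.segment_subset hb.1 hc.1) ?_
  have hsub : openSegment ℝ a b ⊆ {y | segment ℝ y c ⊆ X} := by
    intro z hz
    have hzK : z ∈ K := hK.openSegment_subset ha.1 hb.1 hz
    have hzX : z ∈ X := hK.segment_subset_of_notMem_extremePoints hX hib ha ha' hb
      (openSegment_subset_segment _ _ _ hz)
    refine hK.segment_subset_of_notMem_extremePoints hX hib ⟨hzK, hzX⟩ (fun hz_ext => ha' ?_) hc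
    obtain ⟨rfl, -⟩ := hz_ext.2 ha.1 hb.1 hz
    exact hz_ext
  have hclosure := (hX.setOf_segment_subset c).closure_subset_iff.2 hsub
  rw [closure_openSegment] at hclosure
  exact hclosure (right_mem_segment ℝ a b)

end NormedSpace

theorem stmt_12 {N : ℕ} (X : Set (EuclideanSpace ℝ (Fin N))) (hX : IsClosed X)
    (n : ℕ) (x : Fin (n + 1) → EuclideanSpace ℝ (Fin N))
    (hxX : ∀ i, x i ∈ X) (hai : AffineIndependent ℝ x)
    (hib : convexHull ℝ (Set.range x) ∩ innerBdry X ⊆ Set.range x) :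
    convexHull ℝ (Set.range x) ⊆ X ∨
    convexHull ℝ (Set.range x) ∩ X = Set.range x := by
  have hvert : range x ⊆ convexHull ℝ (range x) ∩ X :=
    subset_inter (subset_convexHull ℝ _) (range_subset_iff.2 hxX)
  by_cases h : convexHull ℝ (range x) ∩ X ⊆ range x
  · exact .inr (h.antisymm hvert)
  · obtain ⟨a, ha, ha'⟩ := not_subset.1 h
    have hconv := (convex_convexHull ℝ _).inter_of_innerBdry_subset_extremePoints hX
      (hib.trans hai.extremePoints_convexHull.ge) ha
      fun h => ha' (extremePoints_convexHull_subset h)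
    exact .inl ((convexHull_min hvert hconv).trans inter_subset_right)
end

section
/- A closed subset of ℝ^N has empty inner boundary if and only if it is convex. -/
theorem stmt_16 {N : ℕ} (X : Set (EuclideanSpace ℝ (Fin N))) (hX : IsClosed X) :
    innerBdry X = ∅ ↔ Convex ℝ X := by
  constructor
  · intro h
    rw [convex_iff_segment_subset]
    intro x hx y hy
    by_cases hxy : x = y
    · subst hxy; simp [segment_same, hx]
    set f : ℝ → EuclideanSpace ℝ (Fin N) := fun t => AffineMap.lineMap x y t with hf
    have hfinj : Function.Injective f := AffineMap.lineMap_injective ℝ hxy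
    have hfc : Continuous f := AffineMap.lineMap_continuous
    set T : Set ℝ := Set.Icc (0:ℝ) 1 ∩ f ⁻¹' X with hT
    have hT0 : (0:ℝ) ∈ T := ⟨by norm_num, by simpa [f] using hx⟩
    have hT1 : (1:ℝ) ∈ T := ⟨by norm_num, by simpa [f] using hy⟩
    have hTc : IsClosed T := isClosed_Icc.inter (hX.preimage hfc)
    suffices hseg : ∀ t ∈ Set.Icc (0:ℝ) 1, f t ∈ X by
      rw [segment_eq_image_lineMap]
      rintro p ⟨t, ht, rfl⟩
      exact hseg t ht
    by_contra hc
    push_neg at hc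
    obtain ⟨t, htI, htX⟩ := hc
    set A := T ∩ Set.Iic t with hA
    set B := T ∩ Set.Ici t with hB
    have hAne : A.Nonempty := ⟨0, hT0, htI.1⟩
    have hBne : B.Nonempty := ⟨1, hT1, htI.2⟩
    have hAbdd : BddAbove A := ⟨t, fun s hs => hs.2⟩
    have hBbdd : BddBelow B := ⟨t, fun s hs => hs.2⟩
    have hAc : IsClosed A := hTc.inter isClosed_Iic
    have hBc : IsClosed B := hTc.inter isClosed_Ici
    set a := sSup A with ha
    set b := sInf B with hb
    have haA : a ∈ A := hAc.csSup_mem hAne hAbdd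
    have hbB : b ∈ B := hBc.csInf_mem hBne hBbdd
    have hat : a ≤ t := haA.2
    have htb : t ≤ b := hbB.2
    have hta : a ≠ t := fun e => htX (by simpa [e] using haA.1.2)
    have htb' : b ≠ t := fun e => htX (by simpa [e] using hbB.1.2)
    have hab : a < b := lt_of_lt_of_le (lt_of_le_of_ne hat hta) (lt_of_le_of_ne htb (Ne.symm htb')).le
    have hfa : f a ∈ X := haA.1.2
    have hfb : f b ∈ X := hbB.1.2
    have hfab : f a ≠ f b := fun e => hab.ne (hfinj e)
    have : f a ∈ innerBdry X := by
      refine ⟨f b, hfa, hfb, hfab, ?_⟩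
      rintro ⟨p, hp, hpa, hpb, hd⟩
      have hw : Wbtw ℝ (f a) p (f b) := dist_add_dist_eq_iff.mp hd
      obtain ⟨u, huI, rfl⟩ := hw
      set s := a + u * (b - a) with hs
      have hkey : (AffineMap.lineMap (f a) (f b)) u = f s := by
        simp only [f, AffineMap.lineMap_apply, vsub_eq_sub, vadd_eq_add, hs]
        module
      rw [hkey] at hp hpa hpb
      have hsa : s ≠ a := fun e => hpa (by rw [e])
      have hsb : s ≠ b := fun e => hpb (by rw [e])
      have hs1 : a ≤ s := by nlinarith [huI.1, huI.2]
      have hs2 : s ≤ b := by nlinarith [huI.1, huI.2]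
      have hsI : s ∈ Set.Icc (0:ℝ) 1 := ⟨le_trans haA.1.1.1 hs1, le_trans hs2 hbB.1.1.2⟩
      rcases lt_trichotomy s t with hst | hst | hst
      · have : s ∈ A := ⟨⟨hsI, hp⟩, hst.le⟩
        exact absurd (le_csSup hAbdd this) (not_le.mpr (lt_of_le_of_ne hs1 (Ne.symm hsa)))
      · exact htX (hst ▸ hp)
      · have : s ∈ B := ⟨⟨hsI, hp⟩, hst.le⟩
        exact absurd (csInf_le hBbdd this) (not_le.mpr (lt_of_le_of_ne hs2 hsb))
    rw [h] at this
    exact this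
  · intro hconv
    ext z
    simp only [innerBdry, Set.mem_setOf_eq, Set.mem_empty_iff_false, iff_false]
    rintro ⟨y, hz, hy, hne, hno⟩
    apply hno
    refine ⟨midpoint ℝ z y, hconv.segment_subset hz hy (midpoint_mem_segment z y), ?_, ?_, ?_⟩
    · intro e
      exact hne ((midpoint_eq_left_iff (R := ℝ)).mp e)
    · intro e
      exact hne ((midpoint_eq_right_iff (R := ℝ)).mp e)
    · rw [dist_left_midpoint (𝕜 := ℝ), dist_midpoint_right (𝕜 := ℝ)]
      norm_num
      ring
end
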